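/- Let A be an incidence matrix of an S(2,μ,v) and I the v×v identity matrix. Then H = [I | A] is a parity-check matrix of a binary linear code of length v(v−1)/(μ(μ−1)) + v, dimension v(v−1)/(μ(μ−1)), girth 6, and minimum distance μ+1. -/

import Mathlib

/-!
Counting the triples (point, point, block) with two distinct points on a common block in two
ways gives `b μ (μ - 1) = v (v - 1)`. The identity block gives `H` full row rank, and since its
columns have weight one they lie on no cycle, so the cycles of the Tanner graph of `H` are those
of `A`: a 4-cycle would be two points on two common blocks, and a triangle of points not on a
common block (which exists as `μ < v`) is a 6-cycle. A codeword is `(A z, z)` (we are in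
characteristic two). If `j₀` lies in the support of `z ≠ 0`, every point of block `j₀` outside the
support of `A z` lies on another block of the support of `z`, and such a block meets `j₀` in at
most one point; hence `μ ≤ wt (A z) + wt z - 1`. The codeword `(A e_{j₀}, e_{j₀})` has weight
`μ + 1`.
-/

open Finset Matrix

theorem ZMod.ne_zero_iff_eq_one_of_two (a : ZMod 2) : a ≠ 0 ↔ a = 1 := by
  decide +revert

theorem hammingNorm_sumElim {m n R : Type*} [Fintype m] [Fintype n] [Zero R] [DecidableEq R]
    (y : m → R) (z : n → R) : hammingNorm (Sum.elim y z) = hammingNorm y + hammingNorm z := by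
  simp only [hammingNorm, card_filter]
  exact Fintype.sum_sum_type _

theorem hammingNorm_neg {ι G : Type*} [Fintype ι] [AddGroup G] [DecidableEq G] (x : ι → G) :
    hammingNorm (-x) = hammingNorm x :=
  hammingNorm_comp (fun _ => Neg.neg) (fun _ => neg_injective) (fun _ => neg_zero)

theorem hammingNorm_single_one {n R : Type*} [Fintype n] [DecidableEq n] [Zero R] [One R]
    [DecidableEq R] [NeZero (1 : R)] (j : n) : hammingNorm (Pi.single j 1 : n → R) = 1 := by
  simp [hammingNorm, Pi.single_apply, filter_eq']

namespace Matrix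

variable {m n R : Type*}

/-- Cycles of length 4 and 6 in the Tanner graph of `H`: the bipartite graph on rows and columns
with an edge `(i, j)` whenever `H i j = 1`. -/
def HasFourCycle [One R] (H : Matrix m n R) : Prop :=
  ∃ (i₁ i₂ : m) (j₁ j₂ : n), i₁ ≠ i₂ ∧ j₁ ≠ j₂ ∧
    H i₁ j₁ = 1 ∧ H i₁ j₂ = 1 ∧ H i₂ j₁ = 1 ∧ H i₂ j₂ = 1

def HasSixCycle [One R] (H : Matrix m n R) : Prop :=
  ∃ (i₁ i₂ i₃ : m) (j₁ j₂ j₃ : n),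
    [i₁, i₂, i₃].Pairwise (· ≠ ·) ∧ [j₁, j₂, j₃].Pairwise (· ≠ ·) ∧
    H i₁ j₁ = 1 ∧ H i₂ j₁ = 1 ∧ H i₂ j₂ = 1 ∧
    H i₃ j₂ = 1 ∧ H i₃ j₃ = 1 ∧ H i₁ j₃ = 1

def block [Fintype m] [One R] [DecidableEq R] (A : Matrix m n R) (j : n) : Finset m :=
  {i | A i j = 1}

section Steiner

variable [One R] {A : Matrix m n R}

theorem not_hasFourCycle_of_existsUnique
    (hpair : ∀ i i' : m, i ≠ i' → ∃! j, A i j = 1 ∧ A i' j = 1) : ¬ A.HasFourCycle := by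
  rintro ⟨i₁, i₂, j₁, j₂, hi, hj, h₁₁, h₁₂, h₂₁, h₂₂⟩
  exact hj ((hpair i₁ i₂ hi).unique ⟨h₁₁, h₂₁⟩ ⟨h₁₂, h₂₂⟩)

variable [Fintype m] [DecidableEq R]

theorem card_block_inter_le_one [DecidableEq m] (h : ¬ A.HasFourCycle) {j j' : n}
    (hj : j ≠ j') : #(A.block j ∩ A.block j') ≤ 1 := by
  refine card_le_one.2 fun i hi i' hi' => ?_
  simp only [block, mem_inter, mem_filter, mem_univ, true_and] at hi hi'
  by_contra hii'
  exact h ⟨i, i', j, j', hii', hj, hi.1, hi.2, hi'.1, hi'.2⟩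

theorem card_mul_eq_of_existsUnique [Fintype n] [DecidableEq m] {μ : ℕ}
    (hcolw : ∀ j, #(A.block j) = μ)
    (hpair : ∀ i i' : m, i ≠ i' → ∃! j, A i j = 1 ∧ A i' j = 1) :
    Fintype.card n * (μ * (μ - 1)) = Fintype.card m * (Fintype.card m - 1) := by
  let r (p : m × m) (j : n) : Prop := A p.1 j = 1 ∧ A p.2 j = 1
  have key := card_mul_eq_card_mul r (s := univ.offDiag) (t := univ) (m := 1) (n := μ * (μ - 1))
    (fun p hp => by
      obtain ⟨j, hj, huniq⟩ := hpair p.1 p.2 (mem_offDiag.1 hp).2.2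
      refine card_eq_one.2 ⟨j, ?_⟩
      ext j'
      simpa [bipartiteAbove, r] using ⟨huniq j', by rintro rfl; exact hj⟩)
    (fun j _ => by
      have : univ.offDiag.bipartiteBelow r j = (A.block j).offDiag := by
        ext p; simp [bipartiteBelow, r, block, mem_offDiag]; tauto
      rw [this, offDiag_card, hcolw, Nat.mul_sub_one])
  rw [offDiag_card, card_univ, mul_one, ← Nat.mul_sub_one] at key
  exact key.symm

theorem hasSixCycle_of_existsUnique {μ : ℕ} (hcolw : ∀ j, #(A.block j) = μ)
    (hpair : ∀ i i' : m, i ≠ i' → ∃! j, A i j = 1 ∧ A i' j = 1)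
    (hm : 1 < Fintype.card m) (hμ : μ < Fintype.card m) : A.HasSixCycle := by
  obtain ⟨i₁, i₂, hi₁₂⟩ := Fintype.exists_pair_of_one_lt_card hm
  obtain ⟨j₁, ⟨h₁₁, h₂₁⟩, huniq⟩ := hpair i₁ i₂ hi₁₂
  obtain ⟨i₃, h₃₁⟩ : ∃ i₃, A i₃ j₁ ≠ 1 := by
    by_contra! hall
    have : A.block j₁ = univ := eq_univ_of_forall fun i => by simp [block, hall i]
    have := hcolw j₁
    simp_all
  have hi₁₃ : i₁ ≠ i₃ := by rintro rfl; exact h₃₁ h₁₁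
  have hi₂₃ : i₂ ≠ i₃ := by rintro rfl; exact h₃₁ h₂₁
  obtain ⟨j₂, ⟨h₂₂, h₃₂⟩, -⟩ := hpair i₂ i₃ hi₂₃
  obtain ⟨j₃, ⟨h₃₃, h₁₃⟩, -⟩ := hpair i₃ i₁ hi₁₃.symm
  have hj₁₂ : j₁ ≠ j₂ := by rintro rfl; exact h₃₁ h₃₂
  have hj₁₃ : j₁ ≠ j₃ := by rintro rfl; exact h₃₁ h₃₃
  have hj₂₃ : j₂ ≠ j₃ := by rintro rfl; exact hj₁₂ (huniq j₂ ⟨h₁₃, h₂₂⟩).symm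
  exact ⟨i₁, i₂, i₃, j₁, j₂, j₃, by simp [hi₁₂, hi₁₃, hi₂₃], by simp [hj₁₂, hj₁₃, hj₂₃],
    h₁₁, h₂₁, h₂₂, h₃₂, h₃₃, h₁₃⟩

end Steiner

section FromColsOne

variable [DecidableEq m]

theorem one_apply_eq_one_iff [Zero R] [One R] [NeZero (1 : R)] {i k : m} :
    (1 : Matrix m m R) i k = 1 ↔ i = k := by
  simp [one_apply]

theorem not_hasFourCycle_fromCols_one [Zero R] [One R] [NeZero (1 : R)] {A : Matrix m n R}
    (h : ¬ A.HasFourCycle) : ¬ (fromCols (1 : Matrix m m R) A).HasFourCycle := by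
  rintro ⟨i₁, i₂, j₁, j₂, hi, hj, h₁₁, h₁₂, h₂₁, h₂₂⟩
  have hinr : ∀ j, fromCols (1 : Matrix m m R) A i₁ j = 1 →
      fromCols (1 : Matrix m m R) A i₂ j = 1 → ∃ k, j = Sum.inr k := by
    rintro (k | k) h₁ h₂
    · rw [fromCols_apply_inl, one_apply_eq_one_iff] at h₁ h₂
      exact absurd (h₁.trans h₂.symm) hi
    · exact ⟨k, rfl⟩
  obtain ⟨k₁, rfl⟩ := hinr j₁ h₁₁ h₂₁
  obtain ⟨k₂, rfl⟩ := hinr j₂ h₁₂ h₂₂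
  exact h ⟨i₁, i₂, k₁, k₂, hi, fun hk => hj (congrArg _ hk), h₁₁, h₁₂, h₂₁, h₂₂⟩

variable [Fintype m] [Fintype n]

theorem rank_fromCols_one [Field R] (A : Matrix m n R) :
    (fromCols (1 : Matrix m m R) A).rank = Fintype.card m := by
  have hsurj : Function.Surjective (fromCols (1 : Matrix m m R) A).mulVecLin := fun y =>
    ⟨Sum.elim y 0, by simp⟩
  rw [rank, LinearMap.range_eq_top.2 hsurj, finrank_top, Module.finrank_fintype_fun_eq_card]

theorem fromCols_one_mulVec_sumElim_eq_zero_iff [Ring R] (A : Matrix m n R)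
    (y : m → R) (z : n → R) :
    fromCols (1 : Matrix m m R) A *ᵥ Sum.elim y z = 0 ↔ y = -(A *ᵥ z) := by
  rw [fromCols_mulVec_sumElim, one_mulVec, add_eq_zero_iff_eq_neg]

end FromColsOne

theorem HasSixCycle.fromCols {m n n' : Type*} [One R] {A : Matrix m n R} (h : A.HasSixCycle)
    (B : Matrix m n' R) : (fromCols B A).HasSixCycle := by
  obtain ⟨i₁, i₂, i₃, j₁, j₂, j₃, hi, hj, hA⟩ := h
  exact ⟨i₁, i₂, i₃, .inr j₁, .inr j₂, .inr j₃, hi,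
    List.pairwise_map.2 (hj.imp Sum.inr_injective.ne), hA⟩

theorem hammingNorm_col [Fintype m] (A : Matrix m n (ZMod 2)) (j : n) :
    hammingNorm (A.col j) = #(A.block j) := by
  simp only [hammingNorm, block, col_apply, ZMod.ne_zero_iff_eq_one_of_two]

section MinimumDistance

variable [Fintype m] [Fintype n] [DecidableEq m] [DecidableEq n] {A : Matrix m n (ZMod 2)}

theorem card_block_lt_hammingNorm_mulVec_add (h : ¬ A.HasFourCycle) {z : n → ZMod 2} {j₀ : n}
    (hz : z j₀ ≠ 0) : #(A.block j₀) < hammingNorm (A *ᵥ z) + hammingNorm z := by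
  set S : Finset n := {j | z j ≠ 0}
  have hj₀ : j₀ ∈ S := by simpa [S] using hz
  have hcover : A.block j₀ ⊆ ({i | (A *ᵥ z) i ≠ 0} : Finset m) ∪
      (S.erase j₀).biUnion fun j => A.block j₀ ∩ A.block j := by
    intro i hi
    rw [mem_union, or_iff_not_imp_left]
    intro hAz
    simp only [mem_filter, mem_univ, true_and, not_not] at hAz
    have hi₁ : A i j₀ = 1 := (mem_filter.1 hi).2
    have hsum : ∑ j ∈ univ.erase j₀, A i j * z j ≠ 0 := by
      rw [mulVec, dotProduct, ← add_sum_erase _ _ (mem_univ j₀), hi₁, one_mul,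
        add_eq_zero_iff_eq_neg] at hAz
      exact fun h0 => hz (by rw [hAz, h0, neg_zero])
    obtain ⟨j, hj, hAj⟩ := exists_ne_zero_of_sum_ne_zero hsum
    simp only [mem_biUnion, mem_inter, mem_erase, mem_univ, block, mem_filter, S, true_and]
    exact ⟨j, ⟨(mem_erase.1 hj).1, right_ne_zero_of_mul hAj⟩, hi₁,
      (ZMod.ne_zero_iff_eq_one_of_two _).1 (left_ne_zero_of_mul hAj)⟩
  calc #(A.block j₀)
      ≤ hammingNorm (A *ᵥ z) + ∑ j ∈ S.erase j₀, #(A.block j₀ ∩ A.block j) :=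
        (card_le_card hcover).trans <|
          (card_union_le _ _).trans (add_le_add le_rfl card_biUnion_le)
    _ ≤ hammingNorm (A *ᵥ z) + #(S.erase j₀) := by
        gcongr
        exact card_eq_sum_ones (S.erase j₀) ▸ sum_le_sum fun j hj =>
          card_block_inter_le_one h (mem_erase.1 hj).1.symm
    _ < hammingNorm (A *ᵥ z) + hammingNorm z := by
        rw [card_erase_of_mem hj₀]
        have : 0 < #S := card_pos.2 ⟨j₀, hj₀⟩
        change _ < _ + #S
        omega

theorem isLeast_hammingNorm_ker_fromCols_one [Nonempty n] {μ : ℕ}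
    (hcolw : ∀ j, #(A.block j) = μ) (h : ¬ A.HasFourCycle) :
    IsLeast {w | ∃ x : m ⊕ n → ZMod 2, x ≠ 0 ∧ fromCols 1 A *ᵥ x = 0 ∧ w = hammingNorm x}
      (μ + 1) := by
  refine ⟨?_, ?_⟩
  · obtain ⟨j⟩ := ‹Nonempty n›
    refine ⟨Sum.elim (-A.col j) (Pi.single j 1), fun h0 => ?_, ?_, ?_⟩
    · simpa using congrFun h0 (.inr j)
    · rw [fromCols_one_mulVec_sumElim_eq_zero_iff, mulVec_single_one]
    · rw [hammingNorm_sumElim, hammingNorm_neg, hammingNorm_col, hcolw, hammingNorm_single_one]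
  · rintro w ⟨x, hx, hHx, rfl⟩
    rw [← Sum.elim_comp_inl_inr x] at hx hHx ⊢
    set z := x ∘ Sum.inr
    rw [fromCols_one_mulVec_sumElim_eq_zero_iff] at hHx
    rw [hHx] at hx ⊢
    obtain ⟨j₀, hj₀⟩ := Function.ne_iff.1 (show z ≠ 0 from fun hz => hx (by simp [hz]))
    rw [hammingNorm_sumElim, hammingNorm_neg, ← hcolw j₀]
    exact card_block_lt_hammingNorm_mulVec_add h hj₀

end MinimumDistance

end Matrix

/-- Let A be an incidence matrix of an S(2,μ,v) (nontrivial: 2 ≤ μ < v) and I the v×v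
identity matrix. Then H = [I | A] is a parity-check matrix of a binary linear code of
length v(v−1)/(μ(μ−1)) + v, dimension v(v−1)/(μ(μ−1)) (i.e. b = v(v−1)/(μ(μ−1)) and
H has full row rank v), girth 6 (no 4-cycle but some 6-cycle in the Tanner graph),
and minimum distance μ+1. -/
theorem stmt_7 (μ v b : ℕ) (hμ : 2 ≤ μ) (hμv : μ < v)
    (A : Matrix (Fin v) (Fin b) (ZMod 2))
    (hcolw : ∀ j, (Finset.univ.filter fun i => A i j = 1).card = μ)
    (hpair : ∀ i i' : Fin v, i ≠ i' → ∃! j, A i j = 1 ∧ A i' j = 1)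
    (H : Matrix (Fin v) (Fin v ⊕ Fin b) (ZMod 2))
    (hH : H = Matrix.fromCols 1 A) :
    b = v * (v - 1) / (μ * (μ - 1)) ∧
    H.rank = v ∧
    (¬ ∃ (i₁ i₂ : Fin v) (j₁ j₂ : Fin v ⊕ Fin b), i₁ ≠ i₂ ∧ j₁ ≠ j₂ ∧
        H i₁ j₁ = 1 ∧ H i₁ j₂ = 1 ∧ H i₂ j₁ = 1 ∧ H i₂ j₂ = 1) ∧
    (∃ (i₁ i₂ i₃ : Fin v) (j₁ j₂ j₃ : Fin v ⊕ Fin b),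
        [i₁, i₂, i₃].Pairwise (· ≠ ·) ∧ [j₁, j₂, j₃].Pairwise (· ≠ ·) ∧
        H i₁ j₁ = 1 ∧ H i₂ j₁ = 1 ∧ H i₂ j₂ = 1 ∧
        H i₃ j₂ = 1 ∧ H i₃ j₃ = 1 ∧ H i₁ j₃ = 1) ∧
    IsLeast {w : ℕ | ∃ x : (Fin v ⊕ Fin b) → ZMod 2, x ≠ 0 ∧ H.mulVec x = 0 ∧
      w = (Finset.univ.filter fun j => x j ≠ 0).card} (μ + 1) := by
  subst hH
  have hv : 1 < Fintype.card (Fin v) := by rw [Fintype.card_fin]; omega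
  have h4 : ¬ A.HasFourCycle := not_hasFourCycle_of_existsUnique hpair
  obtain ⟨j, -⟩ := hpair ⟨0, by omega⟩ ⟨1, by omega⟩ (by simp [Fin.ext_iff])
  have : Nonempty (Fin b) := ⟨j⟩
  have hcount := card_mul_eq_of_existsUnique hcolw hpair
  simp only [Fintype.card_fin] at hcount
  refine ⟨?_, (rank_fromCols_one A).trans (Fintype.card_fin v),
    not_hasFourCycle_fromCols_one h4,
    (hasSixCycle_of_existsUnique hcolw hpair hv (by rwa [Fintype.card_fin])).fromCols 1,
    isLeast_hammingNorm_ker_fromCols_one hcolw h4⟩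
  exact (Nat.div_eq_of_eq_mul_left (Nat.mul_pos (by omega) (by omega)) hcount.symm).symm
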